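/- For every real λ > 0, every nonnegative integer n, and all integers r, m with 1 ≤ r < m, one has ((m−r)/m)·φ(n, λ) + (r/m)·φ(n+m, λ) < φ(n+r, λ), where φ(k, λ) = s_k(λ)/s_{k+1}(λ). -/

import Mathlib

/-- The `n`-th partial sum of the Taylor series of the exponential function. -/
noncomputable def s (n : ℕ) (a : ℝ) : ℝ :=
  ∑ j ∈ Finset.range (n + 1), a ^ j / (Nat.factorial j : ℝ)

/-- The ratio of consecutive partial sums of the exponential series. -/
noncomputable def phi (n : ℕ) (a : ℝ) : ℝ := s n a / s (n + 1) a

/-!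
A strictly concave sequence lies strictly above its chords, so it suffices to show
`φ(j) + φ(j+2) < 2 φ(j+1)`. Through the recurrence `(k+2) s_{k+2} = (λ+k+2) s_{k+1} - λ s_k`, the
defect `2 φ(j+1) - φ(j) - φ(j+2)` is a positive multiple of the quadratic form
`concavityForm λ (j+1)` at `(s_{j+1}, s_{j+2})`. That this form is positive at `(s_k, s_{k+1})`
with `s_k / s_{k+1}` left of its vertex, i.e. that `s_k / s_{k+1}` lies left of the smaller root,
is an invariant of the recurrence.
-/

open Finset

lemma mul_lt_mul_of_quadratic_pos_of_nonpos {α β γ C E w y : ℝ} (hα : 0 ≤ α) (hE : 0 < E)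
    (hCE : α * C ^ 2 - β * C * E + γ * E ^ 2 ≤ 0)
    (hwy : 0 < α * w ^ 2 - β * w * y + γ * y ^ 2) (hv : 2 * α * w < β * y) :
    E * w < C * y := by
  by_contra! hle
  have hfactor : α * (E * w + C * y) - β * E * y < 0 := by nlinarith
  have key : E ^ 2 * (α * w ^ 2 - β * w * y + γ * y ^ 2)
      - y ^ 2 * (α * C ^ 2 - β * C * E + γ * E ^ 2)
      = (E * w - C * y) * (α * (E * w + C * y) - β * E * y) := by ring
  nlinarith [mul_nonpos_of_nonneg_of_nonpos (sub_nonneg.2 hle) hfactor.le,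
    mul_pos (pow_pos hE 2) hwy, mul_nonpos_of_nonneg_of_nonpos (sq_nonneg y) hCE]

lemma weighted_lt_of_strictConcave_nat {f : ℕ → ℝ}
    (hf : ∀ i, f i + f (i + 2) < 2 * f (i + 1)) {n r m : ℕ} (hr : 0 < r) (hrm : r < m) :
    (m - r : ℝ) / m * f n + r / m * f (n + m) < f (n + r) := by
  set D : ℕ → ℝ := fun i => f (i + 1) - f i
  have hD : StrictAnti D := strictAnti_nat_of_succ_lt fun i => by
    simp only [D]; linarith [hf i]
  have telescope (p q : ℕ) : f (p + q) - f p = ∑ i ∈ range q, D (p + i) :=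
    (sum_range_sub (fun i => f (p + i)) q).symm
  obtain ⟨k, rfl⟩ := Nat.exists_eq_add_of_lt hrm
  have left : r * D (n + r) < f (n + r) - f n := by
    rw [telescope]
    calc (r : ℝ) * D (n + r) = ∑ _i ∈ range r, D (n + r) := by simp
      _ < ∑ i ∈ range r, D (n + i) :=
        sum_lt_sum_of_nonempty (nonempty_range_iff.2 hr.ne') fun i hi =>
          hD (by simpa using hi)
  have right : f (n + r + (k + 1)) - f (n + r) ≤ (k + 1) * D (n + r) := by
    rw [telescope]
    calc ∑ i ∈ range (k + 1), D (n + r + i) ≤ ∑ _i ∈ range (k + 1), D (n + r) :=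
          sum_le_sum fun i _ => hD.antitone (by omega)
      _ = (k + 1) * D (n + r) := by simp
  rw [show n + (r + k + 1) = n + r + (k + 1) by ring]
  push_cast
  rw [div_mul_eq_mul_div, div_mul_eq_mul_div, ← add_div, div_lt_iff₀ (by positivity)]
  linear_combination (r : ℝ) * right + (k + 1) * left

def concavityForm (a k x y : ℝ) : ℝ :=
  2 * a ^ 2 * x ^ 2 - a * (a + 3 * k + 5) * x * y + (k + 1) * (a + k + 2) * y ^ 2

lemma concavityForm_step {a k w y z : ℝ} (ha : 0 < a) (hk : 0 ≤ k) (hy : 0 < y)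
    (hz : (k + 2) * z = (a + k + 2) * y - a * w)
    (hQ : 0 < concavityForm a k w y) (hv : 4 * a * w < (a + 3 * k + 5) * y) :
    0 < concavityForm a (k + 1) y z ∧ 4 * a * y < (a + 3 * (k + 1) + 5) * z := by
  set C := (k + 2) * (k + 3) ^ 2 + a * (k + 1) * (a - 2 * k - 5)
  set E := a * ((a - k - 3) ^ 2 + 2 * a)
  have hE : 0 < E := by positivity
  have hCE : concavityForm a k C E = -4 * a ^ 5 := by simp only [concavityForm, C, E]; ring
  -- `(C, E)` is a point where the form is negative, so `w / y` lies left of `C / E`.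
  have hlin : E * w < C * y :=
    mul_lt_mul_of_quadratic_pos_of_nonpos (by positivity) hE
      (hCE.le.trans (by nlinarith [pow_pos ha 5])) hQ (by nlinarith)
  constructor
  · have key : 2 * (k + 2) ^ 2 * concavityForm a (k + 1) y z
        = (k + 2) * ((a + k + 3) * concavityForm a k w y + (C * y - E * w) * y) := by
      simp only [concavityForm, C, E]
      linear_combination (2 * (k + 2) * ((k + 2) * (k + 3) * (z + y) + a * (k + 2) * z
        - a * (k + 3) * (y + w) - a ^ 2 * w)) * hz
    have hpos : 0 < (k + 2) * ((a + k + 3) * concavityForm a k w y + (C * y - E * w) * y) :=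
      mul_pos (by linarith) (add_pos (mul_pos (by linarith) hQ) (mul_pos (sub_pos.2 hlin) hy))
    rw [← key] at hpos
    exact pos_of_mul_pos_right hpos (by positivity)
  · nlinarith [mul_pos (by linarith : (0 : ℝ) < a + 3 * k + 8)
      (by linarith : 0 < (a + 3 * k + 5) * y - 4 * a * w),
      mul_pos (by positivity : 0 < 3 * (a - k - 1) ^ 2 + a + 11 * k + 21) hy]

lemma s_succ (n : ℕ) (a : ℝ) : s (n + 1) a = s n a + a ^ (n + 1) / (n + 1).factorial := by
  simp only [s, sum_range_succ _ (n + 1)]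

lemma s_pos {a : ℝ} (ha : 0 < a) (n : ℕ) : 0 < s n a :=
  sum_pos (fun j _ => by positivity) nonempty_range_add_one

lemma s_lt_s_succ {a : ℝ} (ha : 0 < a) (n : ℕ) : s n a < s (n + 1) a := by
  rw [s_succ]; linarith [show 0 < a ^ (n + 1) / (n + 1).factorial by positivity]

lemma s_recurrence (a : ℝ) (k : ℕ) :
    ((k : ℝ) + 2) * s (k + 2) a = (a + k + 2) * s (k + 1) a - a * s k a := by
  rw [s_succ (k + 1), s_succ k, Nat.factorial_succ (k + 1)]
  push_cast
  field_simp
  ring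

lemma concavityForm_s_pos {a : ℝ} (ha : 0 < a) (k : ℕ) :
    0 < concavityForm a k (s k a) (s (k + 1) a) ∧
      4 * a * s k a < (a + 3 * k + 5) * s (k + 1) a := by
  induction k with
  | zero =>
    have h0 : s 0 a = 1 := by simp [s]
    have h1 : s 1 a = 1 + a := by rw [s_succ, h0]; norm_num
    simp only [concavityForm, h0, h1, Nat.cast_zero]
    constructor <;> nlinarith
  | succ k ih =>
    push_cast
    exact concavityForm_step ha k.cast_nonneg (s_pos ha _) (s_recurrence a k) ih.1 ih.2

lemma two_mul_phi_sub_phi_sub_phi {a : ℝ} (ha : 0 < a) (j : ℕ) :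
    2 * phi (j + 1) a - phi j a - phi (j + 2) a
      = (s (j + 2) a - s (j + 1) a) * concavityForm a (j + 1) (s (j + 1) a) (s (j + 2) a)
        / (a * (j + 3) * s (j + 1) a * s (j + 2) a * s (j + 3) a) := by
  have e1 := s_recurrence a j
  have e2 : ((j : ℝ) + 3) * s (j + 3) a = (a + j + 3) * s (j + 2) a - a * s (j + 1) a := by
    have := s_recurrence a (j + 1); push_cast at this; linarith
  have := s_pos ha (j + 1)
  have := s_pos ha (j + 2)
  have := s_pos ha (j + 3)
  rw [eq_div_iff (by positivity)]
  simp only [phi, concavityForm]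
  field_simp
  linear_combination (a * s (j + 1) a * s (j + 2) a - (a + j + 3) * s (j + 2) a ^ 2) * e1
      + a * (2 * s (j + 1) a ^ 2 - s j a * s (j + 2) a) * e2

lemma phi_add_phi_lt_two_mul_phi {a : ℝ} (ha : 0 < a) (j : ℕ) :
    phi j a + phi (j + 2) a < 2 * phi (j + 1) a := by
  have hQ := (concavityForm_s_pos ha (j + 1)).1
  push_cast at hQ
  have := sub_pos.2 (s_lt_s_succ ha (j + 1))
  have := s_pos ha (j + 1)
  have := s_pos ha (j + 2)
  have := s_pos ha (j + 3)
  have : 0 < 2 * phi (j + 1) a - phi j a - phi (j + 2) a := by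
    rw [two_mul_phi_sub_phi_sub_phi ha j]; positivity
  linarith

theorem stmt_7 (a : ℝ) (ha : 0 < a) (n r m : ℕ) (hr : 1 ≤ r) (hrm : r < m) :
    ((m - r : ℝ) / m) * phi n a + ((r : ℝ) / m) * phi (n + m) a < phi (n + r) a :=
  weighted_lt_of_strictConcave_nat (f := fun k => phi k a) (phi_add_phi_lt_two_mul_phi ha) hr hrm
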